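/- arXiv:2107.03539 — 2 statements merged into one kernel-verified Lean document; each statement's English description precedes it below -/
import Mathlib

section
/- (Choquet topological lemma) Let X be a second countable Hausdorff topological space and let {u_ι}_{ι ∈ I} be an arbitrary family of functions from X to the extended real line [-∞, +∞]. For a subset J ⊆ I, set u^J(x) = sup_{ι ∈ J} u_ι(x). Then there exists a countable subset J ⊆ I such that (u^J)* = (u^I)*, where for a function v : X → [-∞, +∞] its upper semicontinuous regularization is defined by v*(x) = limsup_{y → x} v(y). -/
/-!
Over each set `U` of a countable base, `sup_U u^I = sup_I (sup_U u_ι)` is a supremum in the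
first countable order `[-∞, +∞]`, hence the limit of a sequence of its values, so countably
many indices already realize it. The union `J` of these countable index sets, one per basic
set, satisfies `sup_U u^J = sup_U u^I` for every basic `U`, and the limsup at `x` is the
infimum of these suprema over the basic neighbourhoods of `x`.
-/

open Filter Topology

section CountableSupremum

variable {α ι : Type*} [CompleteLinearOrder α] [TopologicalSpace α] [OrderTopology α]
  [FirstCountableTopology α]

theorem exists_countable_biSup_eq_iSup (f : ι → α) :
    ∃ T : Set ι, T.Countable ∧ ⨆ i ∈ T, f i = ⨆ i, f i := by
  rcases isEmpty_or_nonempty ι with _ | _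
  · exact ⟨∅, Set.countable_empty, by simp⟩
  obtain ⟨v, -, -, hv, hv_range⟩ :=
    (isLUB_iSup (f := f)).exists_seq_monotone_tendsto (Set.range_nonempty f)
  choose T hT using hv_range
  refine ⟨Set.range T, Set.countable_range T, le_antisymm (iSup₂_le fun i _ => le_iSup f i) ?_⟩
  refine le_of_tendsto' hv fun n => ?_
  rw [← hT n]
  exact le_iSup₂ (f := fun i (_ : i ∈ Set.range T) => f i) (T n) ⟨n, rfl⟩

theorem exists_countable_forall_biSup_eq_iSup {κ : Type*} [Countable κ] (g : κ → ι → α) :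
    ∃ J : Set ι, J.Countable ∧ ∀ k, ⨆ i ∈ J, g k i = ⨆ i, g k i := by
  choose T hT_countable hT using fun k => exists_countable_biSup_eq_iSup (g k)
  refine ⟨⋃ k, T k, Set.countable_iUnion hT_countable, fun k => le_antisymm ?_ ?_⟩
  · exact iSup₂_le fun i _ => le_iSup (g k) i
  · rw [← hT k]
    exact biSup_mono fun i hi => Set.mem_iUnion_of_mem k hi

end CountableSupremum

theorem choquet_topological_lemma_general
    {X : Type*} [TopologicalSpace X] [SecondCountableTopology X]
    {I : Type*} (u : I → X → EReal) :
    ∃ J : Set I, J.Countable ∧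
      ∀ x : X,
        limsup (fun y => ⨆ ι ∈ J, u ι y) (𝓝 x) = limsup (fun y => ⨆ ι, u ι y) (𝓝 x) := by
  set B := TopologicalSpace.countableBasis X
  have : Countable B := (TopologicalSpace.countable_countableBasis X).to_subtype
  obtain ⟨J, hJ_countable, hJ⟩ :=
    exists_countable_forall_biSup_eq_iSup fun (U : B) ι => ⨆ y ∈ (U : Set X), u ι y
  refine ⟨J, hJ_countable, fun x => ?_⟩
  have hB : (𝓝 x).HasBasis (fun U => U ∈ B ∧ x ∈ U) id :=
    (TopologicalSpace.isBasis_countableBasis X).nhds_hasBasis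
  rw [hB.limsup_eq_iInf_iSup, hB.limsup_eq_iInf_iSup]
  refine iInf_congr fun U => iInf_congr fun hU => ?_
  rw [id, iSup₂_comm, hJ ⟨U, hU.1⟩, iSup_comm]
  exact iSup_congr fun y => iSup_comm

/-- **Choquet's topological lemma.** Let `X` be a second countable Hausdorff space and
`{u_ι}_{ι ∈ I}` a family of functions `X → [-∞, +∞]`. Then there is a countable subset
`J ⊆ I` such that the upper semicontinuous regularizations of `u^J = sup_{ι ∈ J} u_ι` and
of `u^I = sup_{ι ∈ I} u_ι` coincide, where `v*(x) = limsup_{y → x} v(y)`. -/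
theorem choquet_topological_lemma
    {X : Type*} [TopologicalSpace X] [T2Space X] [SecondCountableTopology X]
    {I : Type*} (u : I → X → EReal) :
    ∃ J : Set I, J.Countable ∧
      ∀ x : X,
        limsup (fun y => ⨆ ι ∈ J, u ι y) (𝓝 x) = limsup (fun y => ⨆ ι, u ι y) (𝓝 x) :=
  choquet_topological_lemma_general u
end

section
/- Let X be a Hausdorff topological space and let F be a family of upper semicontinuous functions from X to [-∞, +∞) that is closed under subtracting positive real constants (i.e., if u ∈ F and ε > 0 then u - ε ∈ F). For a subset A ⊆ X define Q_A(x) = sup{ u(x) : u ∈ F, u ≤ 0 on A } (with the convention that the supremum over the empty family is -∞). If E_1 ⊇ E_2 ⊇ E_3 ⊇ ... is a decreasing sequence of nonempty compact subsets of X and E = ⋂_{n} E_n, then for every x ∈ X the sequence Q_{E_n}(x) is nondecreasing and Q_E(x) = lim_{n → ∞} Q_{E_n}(x). -/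
/-!
If `u ∈ F` is `≤ 0` on `E = ⋂ n, E n` and `ε > 0`, then `E` lies in the open set `{u < ε}`
(upper semicontinuity), so by compactness some `E n` does too, and `u - ε ∈ F` competes in
`Q_{E n}`. Hence `u(x) - ε ≤ sup_n Q_{E n}(x)` for all `ε`, which gives `Q_E ≤ sup_n Q_{E n}`;
the reverse inequality and monotonicity hold because `A ↦ Q_A` is antitone.
-/

open Filter Topology

/-- The upper envelope `Q_A(x) = sup { u(x) : u ∈ F, u ≤ 0 on A }` associated to a family `F`
of extended-real-valued functions and a subset `A`; the supremum over the empty family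
is `-∞` (`⊥` in `EReal`). -/
noncomputable def extremalSup {X : Type*} (F : Set (X → EReal)) (A : Set X) (x : X) : EReal :=
  ⨆ u ∈ {u ∈ F | ∀ a ∈ A, u a ≤ 0}, u x

theorem EReal.le_of_forall_pos_sub_le {a b : EReal} (h : ∀ ε : ℝ, 0 < ε → a - ε ≤ b) :
    a ≤ b := by
  induction a with
  | bot => exact bot_le
  | top => simpa only [EReal.top_sub_coe] using h 1 one_pos
  | coe a =>
    induction b with
    | bot =>
      exact absurd (h 1 one_pos) (by rw [← EReal.coe_sub, le_bot_iff]; exact EReal.coe_ne_bot _)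
    | top => exact le_top
    | coe b =>
      refine EReal.coe_le_coe_iff.2 (le_of_forall_pos_le_add fun ε hε => ?_)
      have := h ε hε
      norm_cast at this
      linarith

theorem UpperSemicontinuous.exists_forall_lt_of_directed_isCompact {X ι β : Type*}
    [TopologicalSpace X] [T2Space X] [Nonempty ι] [Preorder β] {u : X → β}
    (hu : UpperSemicontinuous u) {E : ι → Set X} (hE : Directed (· ⊇ ·) E)
    (hc : ∀ i, IsCompact (E i)) {c : β} (h : ∀ y ∈ ⋂ i, E i, u y < c) :
    ∃ i, ∀ y ∈ E i, u y < c :=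
  exists_subset_nhds_of_isCompact hE hc fun y hy => hu y c (h y hy)

section extremalSup

variable {X : Type*} {F : Set (X → EReal)} {x : X}

theorem le_extremalSup {A : Set X} {u : X → EReal} (hu : u ∈ F) (hA : ∀ a ∈ A, u a ≤ 0) :
    u x ≤ extremalSup F A x :=
  le_iSup₂ (f := fun u (_ : u ∈ {u ∈ F | ∀ a ∈ A, u a ≤ 0}) => u x) u ⟨hu, hA⟩

theorem extremalSup_anti {A B : Set X} (h : B ⊆ A) : extremalSup F A x ≤ extremalSup F B x :=
  iSup₂_le fun _ hu => le_extremalSup hu.1 fun a ha => hu.2 a (h ha)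

variable [TopologicalSpace X] [T2Space X] {ι : Type*} [Nonempty ι] {E : ι → Set X}

theorem exists_sub_le_extremalSup_of_le_zero_on_iInter
    (husc : ∀ u ∈ F, UpperSemicontinuous u)
    (hsub : ∀ u ∈ F, ∀ ε : ℝ, 0 < ε → (fun x => u x - (ε : EReal)) ∈ F)
    (hE : Directed (· ⊇ ·) E) (hc : ∀ i, IsCompact (E i))
    {u : X → EReal} (hu : u ∈ F) (hu0 : ∀ a ∈ ⋂ i, E i, u a ≤ 0) {ε : ℝ} (hε : 0 < ε) :
    ∃ i, u x - ε ≤ extremalSup F (E i) x := by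
  obtain ⟨i, hi⟩ := (husc u hu).exists_forall_lt_of_directed_isCompact hE hc
    fun y hy => (hu0 y hy).trans_lt (EReal.coe_pos.2 hε)
  refine ⟨i, le_extremalSup (hsub u hu ε hε) fun a ha => ?_⟩
  exact EReal.sub_le_of_le_add (by simpa using (hi a ha).le)

theorem extremalSup_iInter_eq_iSup
    (husc : ∀ u ∈ F, UpperSemicontinuous u)
    (hsub : ∀ u ∈ F, ∀ ε : ℝ, 0 < ε → (fun x => u x - (ε : EReal)) ∈ F)
    (hE : Directed (· ⊇ ·) E) (hc : ∀ i, IsCompact (E i)) :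
    extremalSup F (⋂ i, E i) x = ⨆ i, extremalSup F (E i) x := by
  refine le_antisymm (iSup₂_le fun u hu => EReal.le_of_forall_pos_sub_le fun ε hε => ?_)
    (iSup_le fun i => extremalSup_anti (Set.iInter_subset E i))
  obtain ⟨i, hi⟩ := exists_sub_le_extremalSup_of_le_zero_on_iInter husc hsub hE hc hu.1 hu.2 hε
  exact hi.trans (le_iSup (fun i => extremalSup F (E i) x) i)

end extremalSup

theorem extremalSup_tendsto_of_antitone_compact_general
    {X : Type*} [TopologicalSpace X] [T2Space X]
    (F : Set (X → EReal))
    (husc : ∀ u ∈ F, UpperSemicontinuous u)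
    (hsub : ∀ u ∈ F, ∀ ε : ℝ, 0 < ε → (fun x => u x - (ε : EReal)) ∈ F)
    (E : ℕ → Set X) (hE : Antitone E)
    (hcompact : ∀ n, IsCompact (E n))
    (x : X) :
    Monotone (fun n => extremalSup F (E n) x) ∧
      Tendsto (fun n => extremalSup F (E n) x) atTop (𝓝 (extremalSup F (⋂ n, E n) x)) := by
  have hmono : Monotone (fun n => extremalSup F (E n) x) := fun _ _ hmn =>
    extremalSup_anti (hE hmn)
  rw [extremalSup_iInter_eq_iSup husc hsub hE.directed_ge hcompact]
  exact ⟨hmono, tendsto_atTop_iSup hmono⟩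

/-- Let `X` be Hausdorff and `F` a family of upper semicontinuous functions `X → [-∞, +∞)`
closed under subtracting positive real constants. If `E 1 ⊇ E 2 ⊇ ...` is a decreasing
sequence of nonempty compact subsets of `X` with intersection `E`, then for every `x` the
sequence `n ↦ Q_{E n}(x)` is nondecreasing and converges to `Q_E(x)`. -/
theorem extremalSup_tendsto_of_antitone_compact
    {X : Type*} [TopologicalSpace X] [T2Space X]
    (F : Set (X → EReal))
    (husc : ∀ u ∈ F, UpperSemicontinuous u)
    (hlt_top : ∀ u ∈ F, ∀ x : X, u x < ⊤)
    (hsub : ∀ u ∈ F, ∀ ε : ℝ, 0 < ε → (fun x => u x - (ε : EReal)) ∈ F)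
    (E : ℕ → Set X) (hE : Antitone E)
    (hne : ∀ n, (E n).Nonempty) (hcompact : ∀ n, IsCompact (E n))
    (x : X) :
    Monotone (fun n => extremalSup F (E n) x) ∧
      Tendsto (fun n => extremalSup F (E n) x) atTop (𝓝 (extremalSup F (⋂ n, E n) x)) :=
  extremalSup_tendsto_of_antitone_compact_general F husc hsub E hE hcompact x
end
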